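/- Let p ≥ 5 be a prime and let s, t : (ℤ/pℤ) ∖ {0} → ℂ be arbitrary. In the polynomial ring ℂ[r_a : a ∈ ℤ/pℤ] let I_{s,t} be the ideal generated by the quadrics R_{a,b,c,d} = r_a r_b − r_c r_d − r_0 r_{a+b}(s_a + s_b − s_c − s_d) for all nonzero a, b, c, d with a + b = c + d ≠ 0, together with R_{a,b,−a,−b} = r_a r_{−a} − r_b r_{−b} − r_0² (−s_a² + 2 t_a + s_b² − 2 t_b) for all nonzero a, b. Then for every n > 0 the ℂ-dimension of the degree-n graded component of ℂ[r_a : a ∈ ℤ/pℤ]/I_{s,t} (i.e., the image of the space of homogeneous polynomials of total degree n in the quotient) is at most np, and the degree-0 component has dimension 1. -/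

import Mathlib

open MvPolynomial

/-- The ideal `I_{s,t}` of ℂ[r_a : a ∈ ℤ/pℤ] generated by the quadrics
`R_{a,b,c,d} = r_a r_b − r_c r_d − r_0 r_{a+b}(s_a + s_b − s_c − s_d)` for nonzero
a, b, c, d with a + b = c + d ≠ 0, and
`R_{a,b,−a,−b} = r_a r_{−a} − r_b r_{−b} − r_0²(−s_a² + 2t_a + s_b² − 2t_b)` for nonzero
a, b. -/
noncomputable def relIdeal (p : ℕ) (s t : ZMod p → ℂ) :
    Ideal (MvPolynomial (ZMod p) ℂ) :=
  Ideal.span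
    ({q | ∃ a b c d : ZMod p, a ≠ 0 ∧ b ≠ 0 ∧ c ≠ 0 ∧ d ≠ 0 ∧ a + b = c + d ∧ a + b ≠ 0 ∧
        q = X a * X b - X c * X d - X 0 * X (a + b) * C (s a + s b - s c - s d)} ∪
     {q | ∃ a b : ZMod p, a ≠ 0 ∧ b ≠ 0 ∧
        q = X a * X (-a) - X b * X (-b) -
          X 0 ^ 2 * C (-(s a) ^ 2 + 2 * t a + (s b) ^ 2 - 2 * t b)})

/-- The degree-n graded component of ℂ[r_a : a ∈ ℤ/pℤ]/I_{s,t}: the image in the quotient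
of the space of homogeneous polynomials of total degree n. -/
noncomputable def gradedPiece (p : ℕ) (s t : ZMod p → ℂ) (n : ℕ) :
    Submodule ℂ (MvPolynomial (ZMod p) ℂ ⧸ relIdeal p s t) :=
  (MvPolynomial.homogeneousSubmodule (ZMod p) ℂ n).map
    (Ideal.Quotient.mkₐ ℂ (relIdeal p s t)).toLinearMap

/-!
Identify a monomial of degree `n` with the multiset of its indices. A defining relation of
`I_{s,t}` replaces two nonzero indices `a, b` by any nonzero `c, d` with `c + d = a + b`, up to a
multiple of a monomial with fewer nonzero indices. Since `ℤ/pℤ` has at least four elements, such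
exchanges connect any two multisets of nonzero residues of the same size and sum. Hence, modulo
monomials with fewer nonzero indices, the class of a monomial depends only on the number `k` of its
nonzero indices and on their sum `σ`, and by induction on `k` the degree-`n` piece is spanned by one
monomial for each pair `(k, σ)` that occurs. For `k ≤ 1` the sum vanishes exactly when `k = 0`, so
`(k - 1, σ)` already determines `(k, σ)`, which leaves at most `n p` spanning monomials. In degree
`0` the piece is spanned by `1`, which survives because `I_{s,t}` vanishes at the origin.
-/

open Module Submodule Relation

theorem Relation.EqvGen.apply_eq {α β : Type*} {r : α → α → Prop} {f : α → β}
    (hf : ∀ x y, r x y → f x = f y) {x y : α} (h : EqvGen r x y) : f x = f y :=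
  congrArg (Quot.lift f hf) (Quot.eqvGen_sound h)

theorem finrank_span_image_le_card_of_sub_mem_span_lower {K V ι κ : Type*} [DivisionRing K]
    [AddCommGroup V] [Module K V] (f : ι → V) (S : Set ι) (level : ι → ℕ) (w : ι → κ)
    (T : Finset κ) (hw : Set.MapsTo w S T)
    (h : ∀ i ∈ S, ∀ j ∈ S, w i = w j → f i - f j ∈ span K (f '' {l ∈ S | level l < level i})) :
    finrank K (span K (f '' S)) ≤ T.card := by
  classical
  let g : κ → V := fun c => if hc : ∃ i ∈ S, w i = c then f hc.choose else 0
  have hg : ∀ k, ∀ i ∈ S, level i = k → f i ∈ span K (g '' T) := by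
    intro k
    induction k using Nat.strong_induction_on with
    | _ k ih =>
      rintro i hi rfl
      have hc : ∃ j ∈ S, w j = w i := ⟨i, hi, rfl⟩
      obtain ⟨hjS, hji⟩ := hc.choose_spec
      have hrep : g (w i) ∈ span K (g '' T) := subset_span ⟨w i, hw hi, rfl⟩
      have hlower : span K (f '' {l ∈ S | level l < level i}) ≤ span K (g '' T) :=
        span_le.2 (by rintro _ ⟨l, ⟨hl, hlt⟩, rfl⟩; exact ih _ hlt l hl rfl)
      simpa [g, dif_pos hc] using add_mem hrep (hlower (h i hi _ hjS hji.symm))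
  have hspan : span K (f '' S) ≤ span K (T.image g : Set V) := by
    rw [Finset.coe_image]
    exact span_le.2 (by rintro _ ⟨i, hi, rfl⟩; exact hg _ i hi rfl)
  calc finrank K (span K (f '' S)) ≤ finrank K (span K (T.image g : Set V)) :=
        finrank_mono hspan
    _ ≤ (T.image g).card := finrank_span_finset_le_card _
    _ ≤ T.card := Finset.card_image_le

namespace Multiset

variable {G : Type*} [AddCommGroup G]

inductive Exchange : Multiset G → Multiset G → Prop
  | intro {a b c d : G} (w : Multiset G) : a ≠ 0 → b ≠ 0 → c ≠ 0 → d ≠ 0 → a + b = c + d →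
      Exchange (a ::ₘ b ::ₘ w) (c ::ₘ d ::ₘ w)

def nonzeroCount [DecidableEq G] (m : Multiset G) : ℕ := card (m.filter (· ≠ 0))

namespace Exchange

variable {m₁ m₂ : Multiset G}

theorem card_eq (h : Exchange m₁ m₂) : card m₁ = card m₂ := by
  obtain ⟨w, -, -, -, -, -⟩ := h
  simp

theorem sum_eq (h : Exchange m₁ m₂) : m₁.sum = m₂.sum := by
  obtain ⟨w, -, -, -, -, hsum⟩ := h
  simp [← add_assoc, hsum]

theorem nonzeroCount_eq [DecidableEq G] (h : Exchange m₁ m₂) :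
    nonzeroCount m₁ = nonzeroCount m₂ := by
  obtain ⟨w, ha, hb, hc, hd, -⟩ := h
  simp [nonzeroCount, filter_cons_of_pos, *]

theorem add_left (h : Exchange m₁ m₂) (u : Multiset G) : Exchange (u + m₁) (u + m₂) := by
  obtain ⟨w, ha, hb, hc, hd, hsum⟩ := h
  simpa only [add_cons] using Exchange.intro (u + w) ha hb hc hd hsum

end Exchange

theorem eqvGen_exchange_add_left {m₁ m₂ : Multiset G} (h : EqvGen Exchange m₁ m₂)
    (u : Multiset G) : EqvGen Exchange (u + m₁) (u + m₂) := by
  induction h with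
  | rel _ _ h => exact .rel _ _ (h.add_left u)
  | refl => exact .refl _
  | symm _ _ _ ih => exact .symm _ _ ih
  | trans _ _ _ _ _ ih₁ ih₂ => exact .trans _ _ _ ih₁ ih₂

theorem exists_eqvGen_exchange_cons [Fintype G] (hG : 3 < Fintype.card G) {a b c e : G}
    (ha : a ≠ 0) (hb : b ≠ 0) (hc : c ≠ 0) (he : e ≠ 0) (w : Multiset G) :
    ∃ x y, x ≠ 0 ∧ y ≠ 0 ∧
      EqvGen Exchange (a ::ₘ b ::ₘ c ::ₘ w) (e ::ₘ x ::ₘ y ::ₘ w) := by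
  classical
  -- `z` avoids `0`, `a + b` and `e - c`, so that the exchanges `a, b ↦ z, a + b - z` and
  -- `z, c ↦ e, z + c - e` only produce nonzero entries.
  obtain ⟨z, -, hz⟩ := Finset.exists_mem_notMem_of_card_lt_card
    ((Finset.card_le_three (a := 0) (b := a + b) (c := e - c)).trans_lt hG)
  simp only [Finset.mem_insert, Finset.mem_singleton, not_or] at hz
  obtain ⟨hz0, hzab, hzc⟩ := hz
  have hy : a + b - z ≠ 0 := sub_ne_zero.2 (Ne.symm hzab)
  have hx : z + c - e ≠ 0 := fun h => hzc (by rw [← sub_eq_zero, ← h]; abel)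
  have h₁ : Exchange (a ::ₘ b ::ₘ c ::ₘ w) (z ::ₘ c ::ₘ (a + b - z) ::ₘ w) := by
    rw [cons_swap c]
    exact .intro _ ha hb hz0 hy (by abel)
  have h₂ : Exchange (z ::ₘ c ::ₘ (a + b - z) ::ₘ w) (e ::ₘ (z + c - e) ::ₘ (a + b - z) ::ₘ w) :=
    .intro _ hz0 hc he hx (by abel)
  exact ⟨_, _, hx, hy, .trans _ _ _ (.rel _ _ h₁) (.rel _ _ h₂)⟩

theorem eqvGen_exchange_of_card_eq_of_sum_eq [Fintype G] (hG : 3 < Fintype.card G)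
    {m₁ m₂ : Multiset G} (h₁ : ∀ x ∈ m₁, x ≠ 0) (h₂ : ∀ x ∈ m₂, x ≠ 0) (hcard : card m₁ = card m₂)
    (hsum : m₁.sum = m₂.sum) : EqvGen Exchange m₁ m₂ := by
  induction m₁ using Multiset.induction_on generalizing m₂ with
  | empty => rw [card_eq_zero.1 hcard.symm]; exact .refl _
  | cons a u₁ ih =>
    obtain ⟨b, u₂, rfl, hu⟩ := card_eq_succ_iff.1 (hcard.symm.trans (card_cons a u₁))
    have ha : a ≠ 0 := h₁ a (mem_cons_self _ _)
    match hk : card u₁ with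
    | 0 =>
      rw [card_eq_zero.1 hk, card_eq_zero.1 (hu.trans hk)] at hsum ⊢
      simp only [sum_cons, sum_zero, add_zero] at hsum
      rw [hsum]; exact .refl _
    | 1 =>
      obtain ⟨c, rfl⟩ := card_eq_one.1 hk
      obtain ⟨d, rfl⟩ := card_eq_one.1 (hu.trans hk)
      simp only [sum_cons, sum_singleton] at hsum
      exact .rel _ _ (.intro 0 ha (h₁ c (by simp)) (h₂ b (by simp)) (h₂ d (by simp)) hsum)
    | k + 2 =>
      obtain ⟨c, v, rfl, hv⟩ := card_eq_succ_iff.1 (hu.trans hk)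
      obtain ⟨d, w, rfl, hw⟩ := card_eq_succ_iff.1 hv
      obtain ⟨x, y, hx, hy, hmove⟩ := exists_eqvGen_exchange_cons hG (h₂ b (by simp))
        (h₂ c (by simp)) (h₂ d (by simp)) ha w
      have hu₁ : EqvGen Exchange u₁ (x ::ₘ y ::ₘ w) := by
        refine ih (fun z hz => h₁ z (mem_cons_of_mem hz)) ?_ ?_ ?_
        · simp only [mem_cons]
          rintro z (rfl | rfl | hz)
          exacts [hx, hy, h₂ z (by simp [hz])]
        · simp [hk, hw]
        · have := hmove.apply_eq fun _ _ h => h.sum_eq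
          simp only [sum_cons] at hsum this
          rw [← add_right_inj a, hsum, this, sum_cons, sum_cons]
      have hcons := eqvGen_exchange_add_left hu₁ {a}
      rw [singleton_add, singleton_add] at hcons
      exact .trans _ _ _ hcons (.symm _ _ hmove)

section DecidableEq

variable [DecidableEq G]

theorem replicate_count_zero_add_filter_ne_zero (m : Multiset G) :
    replicate (count 0 m) 0 + m.filter (· ≠ 0) = m := by
  rw [← filter_eq' m 0]
  exact filter_add_not _ m

theorem nonzeroCount_le_card (m : Multiset G) : nonzeroCount m ≤ card m :=
  card_le_card (filter_le _ m)

theorem count_zero_add_nonzeroCount (m : Multiset G) : count 0 m + nonzeroCount m = card m := by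
  conv_rhs => rw [← replicate_count_zero_add_filter_ne_zero m]
  rw [card_add, card_replicate, nonzeroCount]

theorem sum_filter_ne_zero (m : Multiset G) : (m.filter (· ≠ 0)).sum = m.sum := by
  conv_rhs => rw [← replicate_count_zero_add_filter_ne_zero m]
  simp

theorem nonzeroCount_eq_zero_iff_sum_eq_zero {m : Multiset G} (h : nonzeroCount m ≤ 1) :
    nonzeroCount m = 0 ↔ m.sum = 0 := by
  rw [← sum_filter_ne_zero]
  rcases Nat.le_one_iff_eq_zero_or_eq_one.1 h with h | h
  · simp [card_eq_zero.1 h, nonzeroCount]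
  · obtain ⟨a, ha⟩ := card_eq_one.1 h
    have ha0 : a ≠ 0 := (mem_filter.1 (ha ▸ mem_singleton_self a : a ∈ m.filter (· ≠ 0))).2
    simp [ha, nonzeroCount, ha0]

theorem nonzeroCount_eq_of_sub_one_eq {m₁ m₂ : Multiset G} (hsum : m₁.sum = m₂.sum)
    (h : nonzeroCount m₁ - 1 = nonzeroCount m₂ - 1) : nonzeroCount m₁ = nonzeroCount m₂ := by
  by_contra hne
  have h₁ := nonzeroCount_eq_zero_iff_sum_eq_zero (m := m₁) (by omega)
  have h₂ := nonzeroCount_eq_zero_iff_sum_eq_zero (m := m₂) (by omega)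
  rw [hsum, ← h₂] at h₁
  omega

theorem eqvGen_exchange_of_nonzeroCount_eq [Fintype G] (hG : 3 < Fintype.card G)
    {m₁ m₂ : Multiset G} (hcard : card m₁ = card m₂) (hnz : nonzeroCount m₁ = nonzeroCount m₂)
    (hsum : m₁.sum = m₂.sum) : EqvGen Exchange m₁ m₂ := by
  have hcount : count 0 m₁ = count 0 m₂ := by
    have h₁ := count_zero_add_nonzeroCount m₁
    have h₂ := count_zero_add_nonzeroCount m₂
    omega
  rw [← replicate_count_zero_add_filter_ne_zero m₁, ← replicate_count_zero_add_filter_ne_zero m₂,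
    hcount]
  refine eqvGen_exchange_add_left (eqvGen_exchange_of_card_eq_of_sum_eq hG ?_ ?_ hnz ?_) _
  · exact fun x hx => (mem_filter.1 hx).2
  · exact fun x hx => (mem_filter.1 hx).2
  · rw [sum_filter_ne_zero, sum_filter_ne_zero, hsum]

end DecidableEq

end Multiset

theorem Multiset.degree_toFinsupp {α : Type*} [DecidableEq α] (m : Multiset α) :
    (Multiset.toFinsupp m).degree = Multiset.card m :=
  Multiset.toFinsupp_sum_eq m

theorem MvPolynomial.prod_map_X_eq_monomial {σ R : Type*} [CommSemiring R] [DecidableEq σ]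
    (m : Multiset σ) :
    (m.map X).prod = (monomial (Multiset.toFinsupp m) 1 : MvPolynomial σ R) := by
  induction m using Multiset.induction_on with
  | empty => simp
  | cons a m ih =>
    rw [← Multiset.singleton_add, Multiset.toFinsupp_add, Multiset.toFinsupp_singleton,
      ← mul_one (1 : R), ← monomial_mul]
    simp [ih, X]

section Quotient

open Multiset

variable {p : ℕ} (s t : ZMod p → ℂ)

theorem exists_sub_mem_relIdeal {a b c d : ZMod p} (ha : a ≠ 0) (hb : b ≠ 0) (hc : c ≠ 0)
    (hd : d ≠ 0) (hsum : a + b = c + d) :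
    ∃ lam : ℂ, X a * X b - X c * X d - C lam * (X 0 * X (a + b)) ∈ relIdeal p s t := by
  by_cases h0 : a + b = 0
  · obtain rfl : b = -a := eq_neg_of_add_eq_zero_right h0
    obtain rfl : d = -c := eq_neg_of_add_eq_zero_right (hsum ▸ h0)
    refine ⟨-(s a) ^ 2 + 2 * t a + (s c) ^ 2 - 2 * t c,
      Ideal.subset_span (Or.inr ⟨a, c, ha, hc, ?_⟩)⟩
    rw [h0]
    ring
  · exact ⟨s a + s b - s c - s d,
      Ideal.subset_span (Or.inl ⟨a, b, c, d, ha, hb, hc, hd, hsum, h0, by ring⟩)⟩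

noncomputable def monomialClass (m : Multiset (ZMod p)) :
    MvPolynomial (ZMod p) ℂ ⧸ relIdeal p s t :=
  Ideal.Quotient.mkₐ ℂ (relIdeal p s t) (m.map X).prod

noncomputable def lowerSpan (n k : ℕ) : Submodule ℂ (MvPolynomial (ZMod p) ℂ ⧸ relIdeal p s t) :=
  span ℂ (monomialClass s t '' {m | card m = n ∧ nonzeroCount m < k})

variable {s t}

theorem Multiset.Exchange.monomialClass_sub_mem_lowerSpan {m₁ m₂ : Multiset (ZMod p)}
    (h : Exchange m₁ m₂) :
    monomialClass s t m₁ - monomialClass s t m₂ ∈ lowerSpan s t (card m₁) (nonzeroCount m₁) := by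
  obtain @⟨a, b, c, d, w, ha, hb, hc, hd, hsum⟩ := h
  obtain ⟨lam, hlam⟩ := exists_sub_mem_relIdeal s t ha hb hc hd hsum
  have hdiff : monomialClass s t (a ::ₘ b ::ₘ w) - monomialClass s t (c ::ₘ d ::ₘ w) =
      lam • monomialClass s t (0 ::ₘ (a + b) ::ₘ w) := by
    rw [← sub_eq_zero, monomialClass, monomialClass, monomialClass, ← map_sub, ← map_smul,
      ← map_sub, Ideal.Quotient.mkₐ_eq_mk, Ideal.Quotient.eq_zero_iff_mem]
    convert Ideal.mul_mem_right (w.map X).prod _ hlam using 1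
    simp only [map_cons, prod_cons, smul_eq_C_mul]
    ring
  rw [hdiff]
  refine smul_mem _ _ (subset_span ⟨_, ⟨by simp, ?_⟩, rfl⟩)
  by_cases hab : a + b = 0 <;> simp [nonzeroCount, ha, hb, hab]

theorem monomialClass_sub_mem_lowerSpan_of_eqvGen {m₁ m₂ : Multiset (ZMod p)}
    (h : EqvGen Exchange m₁ m₂) :
    monomialClass s t m₁ - monomialClass s t m₂ ∈ lowerSpan s t (card m₁) (nonzeroCount m₁) := by
  induction h with
  | rel _ _ h => exact h.monomialClass_sub_mem_lowerSpan
  | refl => rw [sub_self]; exact zero_mem _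
  | symm x y hxy ih =>
    rw [← hxy.apply_eq fun _ _ h => h.card_eq, ← hxy.apply_eq fun _ _ h => h.nonzeroCount_eq,
      ← neg_sub]
    exact neg_mem ih
  | trans x y z hxy _ ih₁ ih₂ =>
    rw [← hxy.apply_eq fun _ _ h => h.card_eq, ← hxy.apply_eq fun _ _ h => h.nonzeroCount_eq]
      at ih₂
    simpa using add_mem ih₁ ih₂

theorem monomialClass_sub_mem_lowerSpan (hp : 3 < p) {m₁ m₂ : Multiset (ZMod p)}
    (hcard : card m₁ = card m₂) (hnz : nonzeroCount m₁ = nonzeroCount m₂)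
    (hsum : m₁.sum = m₂.sum) :
    monomialClass s t m₁ - monomialClass s t m₂ ∈ lowerSpan s t (card m₁) (nonzeroCount m₁) :=
  haveI : NeZero p := ⟨by omega⟩
  monomialClass_sub_mem_lowerSpan_of_eqvGen
    (eqvGen_exchange_of_nonzeroCount_eq (by rwa [ZMod.card]) hcard hnz hsum)

theorem gradedPiece_eq_span_monomialClass (n : ℕ) :
    gradedPiece p s t n = span ℂ (monomialClass s t '' {m | card m = n}) := by
  have hdeg : {d : ZMod p →₀ ℕ | d.degree = n} = toFinsupp '' {m | card m = n} := by
    ext d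
    obtain ⟨m, rfl⟩ := toFinsupp.surjective d
    simp [degree_toFinsupp]
  rw [gradedPiece, homogeneousSubmodule_eq_finsupp_supported,
    AddMonoidAlgebra.supported_eq_span_single, map_span, Set.image_image, hdeg, Set.image_image]
  refine congrArg _ (Set.image_congr fun m _ => ?_)
  rw [monomialClass, prod_map_X_eq_monomial, single_eq_monomial]
  rfl

theorem relIdeal_ne_top : relIdeal p s t ≠ ⊤ := by
  have hle : relIdeal p s t ≤ RingHom.ker (eval fun _ : ZMod p => (0 : ℂ)) := by
    rw [relIdeal, Ideal.span_le]
    rintro q (⟨a, b, c, d, -, -, -, -, -, -, rfl⟩ | ⟨a, b, -, -, rfl⟩) <;> simp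
  intro htop
  simpa using hle (htop ▸ Submodule.mem_top : (1 : MvPolynomial (ZMod p) ℂ) ∈ relIdeal p s t)

theorem finrank_gradedPiece_zero : finrank ℂ (gradedPiece p s t 0) = 1 := by
  have : Nontrivial (MvPolynomial (ZMod p) ℂ ⧸ relIdeal p s t) :=
    Ideal.Quotient.nontrivial_iff.2 relIdeal_ne_top
  have hone : monomialClass s t '' {m | card m = 0} = {1} := by
    simp [card_eq_zero, monomialClass]
  rw [gradedPiece_eq_span_monomialClass, hone, finrank_span_singleton one_ne_zero]

theorem finrank_gradedPiece_le (hp : 3 < p) {n : ℕ} (hn : 0 < n) :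
    finrank ℂ (gradedPiece p s t n) ≤ n * p := by
  have : NeZero p := ⟨by omega⟩
  rw [gradedPiece_eq_span_monomialClass]
  calc _ ≤ (Finset.range n ×ˢ (Finset.univ : Finset (ZMod p))).card := by
        refine finrank_span_image_le_card_of_sub_mem_span_lower _ _ nonzeroCount
          (fun m => (nonzeroCount m - 1, m.sum)) _ ?_ ?_
        · intro m (hm : card m = n)
          have := nonzeroCount_le_card m
          simpa using (by omega : nonzeroCount m - 1 < n)
        · rintro m₁ hm₁ m₂ hm₂ hw
          simp only [Prod.mk.injEq] at hw
          have := monomialClass_sub_mem_lowerSpan hp (hm₁.trans hm₂.symm)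
            (nonzeroCount_eq_of_sub_one_eq hw.2 hw.1) hw.2 (s := s) (t := t)
          rwa [hm₁] at this
    _ = n * p := by simp

end Quotient

theorem statement11_general (p : ℕ) (hp5 : 5 ≤ p)
    (s t : ZMod p → ℂ) :
    (∀ n : ℕ, 0 < n → Module.finrank ℂ (gradedPiece p s t n) ≤ n * p) ∧
    Module.finrank ℂ (gradedPiece p s t 0) = 1 :=
  ⟨fun _ hn => finrank_gradedPiece_le (by omega) hn, finrank_gradedPiece_zero⟩

/-- For arbitrary s, t, the degree-n graded component of the quotient ring
has ℂ-dimension at most np for n > 0, and the degree-0 component has dimension 1. -/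
theorem statement11 (p : ℕ) (hp : p.Prime) (hp5 : 5 ≤ p)
    (s t : ZMod p → ℂ) :
    (∀ n : ℕ, 0 < n → Module.finrank ℂ (gradedPiece p s t n) ≤ n * p) ∧
    Module.finrank ℂ (gradedPiece p s t 0) = 1 :=
  statement11_general p hp5 s t
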